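/- arXiv:1607.08640 — 2 statements merged into one kernel-verified Lean document; each statement's English description precedes it below -/
import Mathlib

section
/- If v is a bounded weight on G and H^∞_v(G) is a Banach space, then G equals the holomorphically convex hull of E_v in G: for every z_0 ∈ G and every holomorphic g on G, |g(z_0)| ≤ sup_{ζ ∈ E_v} |g(ζ)|. -/
open Complex Metric Set Filter Topology MeasureTheory

noncomputable section

/-- `f` is holomorphic on `G` and `sup_{z in G} v z * |f z| < ∞`. -/
def MemHv (G : Set ℂ) (v : ℂ → ℝ) (f : ℂ → ℂ) : Prop :=
  DifferentiableOn ℂ f G ∧ ∃ C : ℝ, ∀ z ∈ G, v z * ‖f z‖ ≤ C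

/-- The weighted sup-seminorm `‖f‖_v`. -/
def HvNorm (G : Set ℂ) (v : ℂ → ℝ) (f : ℂ → ℂ) : ℝ :=
  sSup ((fun z => v z * ‖f z‖) '' G)

/-- A `‖·‖_v`-Cauchy sequence. -/
def HvCauchy (G : Set ℂ) (v : ℂ → ℝ) (F : ℕ → ℂ → ℂ) : Prop :=
  ∀ ε : ℝ, 0 < ε → ∃ N : ℕ, ∀ m ≥ N, ∀ n ≥ N, ∀ z ∈ G,
    v z * ‖F m z - F n z‖ ≤ ε

/-- Convergence in the `‖·‖_v`-seminorm. -/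
def HvTendsto (G : Set ℂ) (v : ℂ → ℝ) (F : ℕ → ℂ → ℂ) (f : ℂ → ℂ) : Prop :=
  ∀ ε : ℝ, 0 < ε → ∃ N : ℕ, ∀ n ≥ N, ∀ z ∈ G,
    v z * ‖F n z - f z‖ ≤ ε

/-- Completeness of `H^∞_v(G)`: every Cauchy sequence converges in the space. -/
def HvComplete (G : Set ℂ) (v : ℂ → ℝ) : Prop :=
  ∀ F : ℕ → ℂ → ℂ, (∀ n, MemHv G v (F n)) → HvCauchy G v F →
    ∃ f : ℂ → ℂ, MemHv G v f ∧ HvTendsto G v F f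

/-- The seminorm `‖·‖_v` is a norm: `‖f‖_v = 0` forces `f = 0` on `G`. -/
def HvNormed (G : Set ℂ) (v : ℂ → ℝ) : Prop :=
  ∀ f : ℂ → ℂ, MemHv G v f → (∀ z ∈ G, v z * ‖f z‖ = 0) →
    ∀ z ∈ G, f z = 0

/-- `H^∞_v(G)` is a Banach space. -/
def IsBanachHv (G : Set ℂ) (v : ℂ → ℝ) : Prop :=
  HvNormed G v ∧ HvComplete G v

/-!
Suppose `‖g z₀‖ > C ≥ sup_{E_v} ‖g‖` and put `φ = g / g z₀`, so that `‖φ‖ ≤ r < 1` on `E_v` and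
`φ z₀ = 1`. Since `v` is bounded, the partial sums `Sₙ = ∑_{k<n} φ^k` form a `‖·‖_v`-Cauchy
sequence; its limit `f` satisfies `v · |f (1 - φ) - 1| = 0` on `G`, because
`Sₙ (1 - φ) = 1 - φⁿ` and `v |φ|ⁿ ≤ M rⁿ`. As `‖·‖_v` is a norm, `f (1 - φ) = 1` on `G`, which
is absurd at `z₀`.
-/

def geomPartialSum (φ : ℂ → ℂ) (n : ℕ) (z : ℂ) : ℂ := ∑ k ∈ Finset.range n, φ z ^ k

lemma geomPartialSum_mul_one_sub (φ : ℂ → ℂ) (n : ℕ) (z : ℂ) :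
    geomPartialSum φ n z * (1 - φ z) = 1 - φ z ^ n :=
  geom_sum_mul_neg (φ z) n

lemma geomPartialSum_sub_geomPartialSum (φ : ℂ → ℂ) {n m : ℕ} (hnm : n ≤ m) (z : ℂ) :
    geomPartialSum φ m z - geomPartialSum φ n z = ∑ k ∈ Finset.Ico n m, φ z ^ k :=
  (Finset.sum_Ico_eq_sub _ hnm).symm

lemma DifferentiableOn.geomPartialSum {G : Set ℂ} {φ : ℂ → ℂ} (hφ : DifferentiableOn ℂ φ G)
    (n : ℕ) : DifferentiableOn ℂ (geomPartialSum φ n) G :=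
  DifferentiableOn.fun_sum fun k _ => hφ.pow k

lemma mul_norm_sum_pow_le {a M r : ℝ} {w : ℂ} (ha : 0 ≤ a) (haM : a ≤ M) (hr : 0 ≤ r)
    (hw : 0 < a → ‖w‖ ≤ r) (s : Finset ℕ) :
    a * ‖∑ k ∈ s, w ^ k‖ ≤ M * ∑ k ∈ s, r ^ k := by
  rcases ha.eq_or_lt with rfl | ha
  · rw [zero_mul]
    exact mul_nonneg (ha.trans haM) (Finset.sum_nonneg fun k _ => pow_nonneg hr k)
  calc a * ‖∑ k ∈ s, w ^ k‖ ≤ a * ∑ k ∈ s, ‖w‖ ^ k := by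
        gcongr
        exact (norm_sum_le _ _).trans_eq (by simp only [norm_pow])
    _ ≤ M * ∑ k ∈ s, r ^ k :=
        mul_le_mul haM (Finset.sum_le_sum fun k _ => pow_le_pow_left₀ (norm_nonneg _) (hw ha) k)
          (by positivity) (ha.le.trans haM)

lemma mul_norm_pow_le {a M r : ℝ} {w : ℂ} (ha : 0 ≤ a) (haM : a ≤ M) (hr : 0 ≤ r)
    (hw : 0 < a → ‖w‖ ≤ r) (n : ℕ) : a * ‖w ^ n‖ ≤ M * r ^ n := by
  simpa using mul_norm_sum_pow_le ha haM hr hw {n}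

lemma mul_norm_geom_sum_Ico_le {a M r : ℝ} {w : ℂ} (ha : 0 ≤ a) (haM : a ≤ M) (hr0 : 0 ≤ r)
    (hr1 : r < 1) (hw : 0 < a → ‖w‖ ≤ r) (n m : ℕ) :
    a * ‖∑ k ∈ Finset.Ico n m, w ^ k‖ ≤ M * (r ^ n / (1 - r)) :=
  (mul_norm_sum_pow_le ha haM hr0 hw _).trans <|
    mul_le_mul_of_nonneg_left (geom_sum_Ico_le_of_lt_one hr0 hr1) (ha.trans haM)

section Weighted

variable {G : Set ℂ} {v : ℂ → ℝ}

lemma HvTendsto.tendsto_apply {F : ℕ → ℂ → ℂ} {f : ℂ → ℂ} (h : HvTendsto G v F f) {z : ℂ}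
    (hz : z ∈ G) (hvz : 0 ≤ v z) : Tendsto (fun n => v z * ‖F n z - f z‖) atTop (𝓝 0) := by
  refine Metric.tendsto_atTop.2 fun ε hε => ?_
  obtain ⟨N, hN⟩ := h (ε / 2) (half_pos hε)
  refine ⟨N, fun n hn => ?_⟩
  rw [Real.dist_0_eq_abs, abs_of_nonneg (by positivity)]
  exact (hN n hn z hz).trans_lt (half_lt_self hε)

lemma hvCauchy_of_le {F : ℕ → ℂ → ℂ} {b : ℕ → ℝ} (hb : Tendsto b atTop (𝓝 0))
    (hF : ∀ z ∈ G, ∀ n m, n ≤ m → v z * ‖F m z - F n z‖ ≤ b n) : HvCauchy G v F := by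
  intro ε hε
  obtain ⟨N, hN⟩ := eventually_atTop.1 (hb.eventually_le_const hε)
  refine ⟨N, fun m hm n hn z hz => ?_⟩
  rcases le_total n m with hnm | hmn
  · exact (hF z hz n m hnm).trans (hN n hn)
  · rw [norm_sub_rev]
    exact (hF z hz m n hmn).trans (hN m hm)

variable {M r : ℝ} {φ : ℂ → ℂ}

lemma memHv_geomPartialSum (hv : ∀ z ∈ G, 0 ≤ v z) (hM : ∀ z ∈ G, v z ≤ M)
    (hφ : DifferentiableOn ℂ φ G) (hr0 : 0 ≤ r) (hr1 : r < 1)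
    (hφr : ∀ z ∈ G, 0 < v z → ‖φ z‖ ≤ r) (n : ℕ) : MemHv G v (geomPartialSum φ n) :=
  ⟨hφ.geomPartialSum n, M * (r ^ 0 / (1 - r)), fun z hz => by
    simpa only [geomPartialSum, Finset.range_eq_Ico] using
      mul_norm_geom_sum_Ico_le (hv z hz) (hM z hz) hr0 hr1 (hφr z hz) 0 n⟩

lemma hvCauchy_geomPartialSum (hv : ∀ z ∈ G, 0 ≤ v z) (hM : ∀ z ∈ G, v z ≤ M) (hr0 : 0 ≤ r)
    (hr1 : r < 1) (hφr : ∀ z ∈ G, 0 < v z → ‖φ z‖ ≤ r) : HvCauchy G v (geomPartialSum φ) := by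
  have hb : Tendsto (fun n : ℕ => M * (r ^ n / (1 - r))) atTop (𝓝 0) := by
    simpa using ((tendsto_pow_atTop_nhds_zero_of_lt_one hr0 hr1).div_const (1 - r)).const_mul M
  refine hvCauchy_of_le hb fun z hz n m hnm => ?_
  rw [geomPartialSum_sub_geomPartialSum φ hnm]
  exact mul_norm_geom_sum_Ico_le (hv z hz) (hM z hz) hr0 hr1 (hφr z hz) n m

/-- The `‖·‖_v`-limit of the geometric series of `φ` is `(1 - φ)⁻¹` up to a `v`-null error. -/
lemma weight_mul_norm_mul_one_sub_sub_one_eq_zero (hv : ∀ z ∈ G, 0 ≤ v z)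
    (hM : ∀ z ∈ G, v z ≤ M) (hr0 : 0 ≤ r) (hr1 : r < 1) (hφr : ∀ z ∈ G, 0 < v z → ‖φ z‖ ≤ r)
    {f : ℂ → ℂ} (hf : HvTendsto G v (geomPartialSum φ) f) {z : ℂ} (hz : z ∈ G) :
    v z * ‖f z * (1 - φ z) - 1‖ = 0 := by
  have hvz := hv z hz
  have hbound : ∀ n, v z * ‖f z * (1 - φ z) - 1‖ ≤
      v z * ‖geomPartialSum φ n z - f z‖ * ‖1 - φ z‖ + M * r ^ n := fun n => by
    have hsplit : f z * (1 - φ z) - 1 =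
        -((geomPartialSum φ n z - f z) * (1 - φ z)) - φ z ^ n := by
      linear_combination geomPartialSum_mul_one_sub φ n z
    calc v z * ‖f z * (1 - φ z) - 1‖
        ≤ v z * (‖geomPartialSum φ n z - f z‖ * ‖1 - φ z‖ + ‖φ z ^ n‖) := by
          rw [hsplit, ← norm_mul, ← norm_neg ((geomPartialSum φ n z - f z) * (1 - φ z))]
          gcongr
          exact norm_sub_le _ _
      _ ≤ _ := by
          rw [mul_add, ← mul_assoc]
          exact add_le_add le_rfl (mul_norm_pow_le hvz (hM z hz) hr0 (hφr z hz) n)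
  have hlim : Tendsto (fun n => v z * ‖geomPartialSum φ n z - f z‖ * ‖1 - φ z‖ + M * r ^ n)
      atTop (𝓝 0) := by
    simpa using ((hf.tendsto_apply hz hvz).mul_const ‖1 - φ z‖).add
      ((tendsto_pow_atTop_nhds_zero_of_lt_one hr0 hr1).const_mul M)
  exact le_antisymm (ge_of_tendsto' hlim hbound) (by positivity)

theorem IsBanachHv.apply_ne_one (hB : IsBanachHv G v) (hv : ∀ z ∈ G, 0 ≤ v z)
    (hM : ∀ z ∈ G, v z ≤ M) (hφ : DifferentiableOn ℂ φ G) (hr0 : 0 ≤ r) (hr1 : r < 1)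
    (hφr : ∀ z ∈ G, 0 < v z → ‖φ z‖ ≤ r) {z : ℂ} (hz : z ∈ G) : φ z ≠ 1 := by
  obtain ⟨f, hfmem, hftend⟩ := hB.2 _ (memHv_geomPartialSum hv hM hφ hr0 hr1 hφr)
    (hvCauchy_geomPartialSum hv hM hr0 hr1 hφr)
  have hnull := fun y hy =>
    weight_mul_norm_mul_one_sub_sub_one_eq_zero hv hM hr0 hr1 hφr hftend (z := y) hy
  have hinv : f z * (1 - φ z) - 1 = 0 :=
    hB.1 _ ⟨(hfmem.1.mul ((differentiableOn_const 1).sub hφ)).sub (differentiableOn_const 1),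
      0, fun y hy => (hnull y hy).le⟩ hnull z hz
  intro h1
  simp [h1] at hinv

end Weighted

theorem stmt12_general (G : Set ℂ) (v : ℂ → ℝ)
    (hv : ∀ z ∈ G, 0 ≤ v z) (hbdd : ∃ M : ℝ, ∀ z ∈ G, v z ≤ M)
    (hB : IsBanachHv G v) :
    ∀ z0 ∈ G, ∀ g : ℂ → ℂ, DifferentiableOn ℂ g G →
      ∀ C : ℝ, (∀ ζ ∈ {w ∈ G | 0 < v w}, ‖g ζ‖ ≤ C) →
        ‖g z0‖ ≤ C := by
  intro z0 hz0 g hg C hC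
  obtain ⟨M, hM⟩ := hbdd
  by_contra! hlt
  rcases lt_or_ge C 0 with hC0 | hC0
  · -- `E_v` is empty, so the constant `1` satisfies the hypotheses of `apply_ne_one` with `r = 0`.
    refine hB.apply_ne_one hv hM (differentiableOn_const 1) le_rfl zero_lt_one
      (fun z hz hvz => ?_) hz0 rfl
    exact absurd (hC z ⟨hz, hvz⟩) (by linarith [norm_nonneg (g z)])
  · have hgz0 : 0 < ‖g z0‖ := hC0.trans_lt hlt
    refine hB.apply_ne_one hv hM (hg.div_const (g z0)) (div_nonneg hC0 hgz0.le)
      ((div_lt_one hgz0).2 hlt) (fun z hz hvz => ?_) hz0 (div_self (norm_pos_iff.1 hgz0))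
    rw [norm_div]
    exact div_le_div_of_nonneg_right (hC z ⟨hz, hvz⟩) hgz0.le

theorem stmt12 (G : Set ℂ) (v : ℂ → ℝ) (hG : IsOpen G) (hGc : IsConnected G)
    (hv : ∀ z ∈ G, 0 ≤ v z) (hbdd : ∃ M : ℝ, ∀ z ∈ G, v z ≤ M)
    (hB : IsBanachHv G v) :
    ∀ z0 ∈ G, ∀ g : ℂ → ℂ, DifferentiableOn ℂ g G →
      ∀ C : ℝ, (∀ ζ ∈ {w ∈ G | 0 < v w}, ‖g ζ‖ ≤ C) →
        ‖g z0‖ ≤ C :=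
  stmt12_general G v hv hbdd hB
end
end

section
/- Let F be a nonzero holomorphic function on a domain G and define v(z) = 1/|F(z)| if F(z) ≠ 0 and v(z) = 0 otherwise. Then H^∞_v(G) is a Banach space and equals {f ∈ H(G) : there exists C > 0 with |f(z)| ≤ C|F(z)| for all z ∈ G}. -/
open Complex Metric Set Filter Topology MeasureTheory

noncomputable section

/-! The condition `v z * ‖f z‖ ≤ C` says nothing at the zeros of `F`, but these are isolated,
so by continuity it gives `‖f‖ ≤ C ‖F‖` on all of `G`. In particular a `‖·‖_v`-Cauchy sequence
satisfies `‖fₘ - fₙ‖ ≤ ε ‖F‖`, so it is uniformly Cauchy wherever `F` is bounded, hence locally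
uniformly, and its limit is holomorphic by Weierstrass. -/

section IsolatedZeros

variable {𝕜 E : Type*} [NontriviallyNormedField 𝕜] [NormedAddCommGroup E] [NormedSpace 𝕜 E]
  {F : 𝕜 → E} {U : Set 𝕜}

theorem AnalyticOnNhd.eventually_ne_zero_nhdsNE (hF : AnalyticOnNhd 𝕜 F U)
    (hU : IsPreconnected U) (hFne : ∃ w ∈ U, F w ≠ 0) {z : 𝕜} (hz : z ∈ U) :
    ∀ᶠ w in 𝓝[≠] z, F w ≠ 0 := by
  by_contra h
  obtain ⟨w, hw, hFw⟩ := hFne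
  exact hFw (hF.eqOn_zero_of_preconnected_of_frequently_eq_zero hU hz (not_eventually.mp h
    |>.mono fun _ => not_not.mp) hw)

theorem AnalyticOnNhd.le_of_le_of_ne_zero (hF : AnalyticOnNhd 𝕜 F U) (hU : IsPreconnected U)
    (hUo : IsOpen U) (hFne : ∃ w ∈ U, F w ≠ 0) {u w : 𝕜 → ℝ} (hu : ContinuousOn u U)
    (hw : ContinuousOn w U) (h : ∀ z ∈ U, F z ≠ 0 → u z ≤ w z) {z : 𝕜} (hz : z ∈ U) :
    u z ≤ w z := by
  have hUz : U ∈ 𝓝[≠] z := nhdsWithin_le_nhds (hUo.mem_nhds hz)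
  have hle : ∀ᶠ y in 𝓝[≠] z, u y ≤ w y := by
    filter_upwards [hF.eventually_ne_zero_nhdsNE hU hFne hz, hUz] with y hFy hy
    exact h y hy hFy
  exact le_of_tendsto_of_tendsto ((hu.continuousAt (hUo.mem_nhds hz)).tendsto.mono_left
    nhdsWithin_le_nhds) ((hw.continuousAt (hUo.mem_nhds hz)).tendsto.mono_left
    nhdsWithin_le_nhds) hle

end IsolatedZeros

section UniformCauchy

variable {α E : Type*} [NormedAddCommGroup E] {Fs : ℕ → α → E} {b : α → ℝ} {s : Set α}

theorem uniformCauchySeqOn_of_norm_sub_le_mul {M : ℝ} (hb : ∀ x ∈ s, b x ≤ M)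
    (h : ∀ ε > 0, ∃ N, ∀ m ≥ N, ∀ n ≥ N, ∀ x ∈ s, ‖Fs m x - Fs n x‖ ≤ ε * b x) :
    UniformCauchySeqOn Fs atTop s := by
  rw [Metric.uniformCauchySeqOn_iff]
  intro ε hε
  have hM : 0 < max M 0 + 1 := by positivity
  obtain ⟨N, hN⟩ := h (ε / (max M 0 + 1)) (div_pos hε hM)
  refine ⟨N, fun m hm n hn x hx => ?_⟩
  rw [dist_eq_norm]
  calc ‖Fs m x - Fs n x‖ ≤ ε / (max M 0 + 1) * b x := hN m hm n hn x hx
    _ ≤ ε / (max M 0 + 1) * max M 0 := by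
      gcongr; exact (hb x hx).trans (le_max_left M 0)
    _ < ε / (max M 0 + 1) * (max M 0 + 1) := by gcongr; linarith
    _ = ε := div_mul_cancel₀ ε hM.ne'

theorem exists_tendstoLocallyUniformlyOn_of_norm_sub_le_mul [TopologicalSpace α]
    [CompleteSpace E] (hb : ContinuousOn b s)
    (h : ∀ ε > 0, ∃ N, ∀ m ≥ N, ∀ n ≥ N, ∀ x ∈ s, ‖Fs m x - Fs n x‖ ≤ ε * b x) :
    ∃ f : α → E, TendstoLocallyUniformlyOn Fs f atTop s := by
  have hloc : ∀ x ∈ s, ∃ t ∈ 𝓝[s] x, x ∈ t ∧ t ⊆ s ∧ UniformCauchySeqOn Fs atTop t := by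
    intro x hx
    refine ⟨s ∩ {y | b y < b x + 1}, inter_mem self_mem_nhdsWithin
      ((hb x hx).eventually_lt continuousWithinAt_const (lt_add_one _)),
      ⟨hx, show b x < b x + 1 from lt_add_one _⟩, inter_subset_left,
      uniformCauchySeqOn_of_norm_sub_le_mul (fun y hy => hy.2.le) fun ε hε => ?_⟩
    obtain ⟨N, hN⟩ := h ε hε
    exact ⟨N, fun m hm n hn y hy => hN m hm n hn y hy.1⟩
  have hlim : ∀ x ∈ s, Tendsto (Fs · x) atTop (𝓝 (limUnder atTop (Fs · x))) := fun x hx =>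
    let ⟨_, _, hxt, _, hCauchy⟩ := hloc x hx
    (hCauchy.cauchySeq hxt).tendsto_limUnder
  refine ⟨fun x => limUnder atTop (Fs · x), tendstoLocallyUniformlyOn_of_forall_exists_nhds
    fun x hx => ?_⟩
  obtain ⟨t, ht, -, hts, hCauchy⟩ := hloc x hx
  exact ⟨t, ht, hCauchy.tendstoUniformlyOn_of_tendsto fun y hy => hlim y (hts hy)⟩

end UniformCauchy

section WeightedSpace

variable {G : Set ℂ} {v : ℂ → ℝ} {Fs : ℕ → ℂ → ℂ} {f : ℂ → ℂ}

theorem HvCauchy.hvTendsto_of_tendsto (h : HvCauchy G v Fs)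
    (hlim : ∀ z ∈ G, Tendsto (Fs · z) atTop (𝓝 (f z))) : HvTendsto G v Fs f := by
  intro ε hε
  obtain ⟨N, hN⟩ := h ε hε
  refine ⟨N, fun n hn z hz => le_of_tendsto ?_ ((eventually_ge_atTop N).mono
    fun m hm => hN n hn m hm z hz)⟩
  exact (continuous_const.mul (continuous_const.sub continuous_id).norm).continuousAt.tendsto.comp
    (hlim z hz)

theorem HvTendsto.exists_bound (h : HvTendsto G v Fs f) (hv : ∀ z ∈ G, 0 ≤ v z)
    (hbd : ∀ n, ∃ C, ∀ z ∈ G, v z * ‖Fs n z‖ ≤ C) : ∃ C, ∀ z ∈ G, v z * ‖f z‖ ≤ C := by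
  obtain ⟨N, hN⟩ := h 1 one_pos
  obtain ⟨C, hC⟩ := hbd N
  refine ⟨C + 1, fun z hz => ?_⟩
  calc v z * ‖f z‖ ≤ v z * (‖Fs N z‖ + ‖Fs N z - f z‖) := by
        gcongr
        · exact hv z hz
        · exact norm_le_norm_add_norm_sub (Fs N z) (f z)
    _ = v z * ‖Fs N z‖ + v z * ‖Fs N z - f z‖ := mul_add _ _ _
    _ ≤ C + 1 := add_le_add (hC z hz) (hN N le_rfl z hz)

end WeightedSpace

def invNormWeight (F : ℂ → ℂ) (z : ℂ) : ℝ :=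
  if F z = 0 then 0 else ‖F z‖⁻¹

section InvNormWeight

variable {G : Set ℂ} {F : ℂ → ℂ}

theorem invNormWeight_nonneg (F : ℂ → ℂ) (z : ℂ) : 0 ≤ invNormWeight F z := by
  unfold invNormWeight; split <;> positivity

theorem invNormWeight_mul_le_iff {z : ℂ} (hz : F z ≠ 0) {a ε : ℝ} :
    invNormWeight F z * a ≤ ε ↔ a ≤ ε * ‖F z‖ := by
  rw [invNormWeight, if_neg hz, inv_mul_le_iff₀ (norm_pos_iff.mpr hz), mul_comm]

theorem invNormWeight_mul_le {z : ℂ} {a C : ℝ} (hC : 0 ≤ C) (h : a ≤ C * ‖F z‖) :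
    invNormWeight F z * a ≤ C := by
  by_cases hz : F z = 0
  · simpa [invNormWeight, hz] using hC
  · exact (invNormWeight_mul_le_iff hz).mpr h

variable (hG : IsOpen G) (hGc : IsPreconnected G) (hF : DifferentiableOn ℂ F G)
  (hFne : ∃ z ∈ G, F z ≠ 0)
include hG hGc hF hFne

theorem norm_le_mul_norm_of_invNormWeight_mul_le {g : ℂ → ℂ} (hg : ContinuousOn g G) {ε : ℝ}
    (h : ∀ z ∈ G, invNormWeight F z * ‖g z‖ ≤ ε) : ∀ z ∈ G, ‖g z‖ ≤ ε * ‖F z‖ :=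
  fun _ => (hF.analyticOnNhd hG).le_of_le_of_ne_zero hGc hG hFne hg.norm
    (continuousOn_const.mul hF.continuousOn.norm)
    fun z hz hFz => (invNormWeight_mul_le_iff hFz).mp (h z hz)

theorem memHv_invNormWeight_iff {f : ℂ → ℂ} :
    MemHv G (invNormWeight F) f ↔
      DifferentiableOn ℂ f G ∧ ∃ C > (0 : ℝ), ∀ z ∈ G, ‖f z‖ ≤ C * ‖F z‖ := by
  refine ⟨fun ⟨hf, C, hC⟩ => ⟨hf, max C 1, by positivity, ?_⟩,
    fun ⟨hf, C, hC0, hC⟩ => ⟨hf, C, fun z hz => invNormWeight_mul_le hC0.le (hC z hz)⟩⟩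
  exact norm_le_mul_norm_of_invNormWeight_mul_le hG hGc hF hFne hf.continuousOn
    fun z hz => (hC z hz).trans (le_max_left C 1)

theorem hvNormed_invNormWeight : HvNormed G (invNormWeight F) := fun f hf h0 z hz =>
  norm_le_zero_iff.mp <| by
    simpa using norm_le_mul_norm_of_invNormWeight_mul_le hG hGc hF hFne hf.1.continuousOn
      (fun w hw => (h0 w hw).le) z hz

theorem hvComplete_invNormWeight : HvComplete G (invNormWeight F) := by
  intro Fs hmem hCauchy
  have hCauchy' : ∀ ε > 0, ∃ N, ∀ m ≥ N, ∀ n ≥ N, ∀ z ∈ G,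
      ‖Fs m z - Fs n z‖ ≤ ε * ‖F z‖ := fun ε hε =>
    let ⟨N, hN⟩ := hCauchy ε hε
    ⟨N, fun m hm n hn => norm_le_mul_norm_of_invNormWeight_mul_le hG hGc hF hFne
      ((hmem m).1.sub (hmem n).1).continuousOn (hN m hm n hn)⟩
  obtain ⟨f, hf⟩ := exists_tendstoLocallyUniformlyOn_of_norm_sub_le_mul
    hF.continuousOn.norm hCauchy'
  have hlim := hCauchy.hvTendsto_of_tendsto fun z hz => hf.tendsto_at hz
  exact ⟨f, ⟨hf.differentiableOn (Eventually.of_forall fun n => (hmem n).1) hG,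
    hlim.exists_bound (fun z _ => invNormWeight_nonneg F z) fun n => (hmem n).2⟩, hlim⟩

end InvNormWeight

theorem stmt17 (G : Set ℂ) (hG : IsOpen G) (hGc : IsConnected G)
    (F : ℂ → ℂ) (hF : DifferentiableOn ℂ F G) (hFne : ∃ z ∈ G, F z ≠ 0) :
    IsBanachHv G (fun z => if F z = 0 then 0 else (‖F z‖)⁻¹) ∧
    ∀ f : ℂ → ℂ,
      MemHv G (fun z => if F z = 0 then 0 else (‖F z‖)⁻¹) f ↔
        (DifferentiableOn ℂ f G ∧
          ∃ C > (0:ℝ), ∀ z ∈ G, ‖f z‖ ≤ C * ‖F z‖) :=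
  ⟨⟨hvNormed_invNormWeight hG hGc.isPreconnected hF hFne,
    hvComplete_invNormWeight hG hGc.isPreconnected hF hFne⟩,
    fun _ => memHv_invNormWeight_iff hG hGc.isPreconnected hF hFne⟩
end
end
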